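/- For X, Y ∈ VPM°(n), define M(X,Y) = inf{λ > 0 : λY − X ⪰ 0 and λ(I−Y) − (I−X) ⪰ 0}. Then (i) M(X,Y) = max( λmax(Y^{−1/2}XY^{−1/2}), λmax((I−Y)^{−1/2}(I−X)(I−Y)^{−1/2}) ), and (ii) d_H(X,Y) = log M(X,Y) + log M(Y,X). -/

import Mathlib

open Matrix

/-- The square root of a positive semidefinite matrix, as Mathlib defined
`Matrix.PosSemidef.sqrt` before it was removed. -/
noncomputable def Matrix.PosSemidef.sqrt {n 𝕜 : Type*} [Fintype n] [RCLike 𝕜] [PartialOrder 𝕜] [DecidableEq n]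
    {A : Matrix n n 𝕜} (hA : Matrix.PosSemidef A) : Matrix n n 𝕜 :=
  hA.1.eigenvectorUnitary.1 * Matrix.diagonal ((↑) ∘ (√·) ∘ hA.1.eigenvalues) *
    (star hA.1.eigenvectorUnitary : Matrix n n 𝕜)

/-- The open variance-precision bicone VPM°(n): symmetric matrices `X` with
`X` and `I - X` positive definite. -/
def VPM (n : ℕ) : Set (Matrix (Fin n) (Fin n) ℝ) :=
  {X | X.PosDef ∧ (1 - X).PosDef}

/-- Largest (real) eigenvalue of a matrix, as the supremum of its real spectrum. -/
noncomputable def lmax {n : ℕ} (S : Matrix (Fin n) (Fin n) ℝ) : ℝ := sSup (spectrum ℝ S)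

/-- Smallest (real) eigenvalue of a matrix, as the infimum of its real spectrum. -/
noncomputable def lmin {n : ℕ} (S : Matrix (Fin n) (Fin n) ℝ) : ℝ := sInf (spectrum ℝ S)

/-- Hilbert VPM distance. -/
noncomputable def dH {n : ℕ} (J₁ J₂ : Matrix (Fin n) (Fin n) ℝ) : ℝ :=
  Real.log (max (lmax (J₂⁻¹ * J₁)) (lmax ((1 - J₂)⁻¹ * (1 - J₁))) /
            min (lmin (J₂⁻¹ * J₁)) (lmin ((1 - J₂)⁻¹ * (1 - J₁))))

/-- Upper Birkhoff ratio on the hat-embedded product cone: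
`M(X,Y) = inf{λ > 0 : λY − X ⪰ 0 and λ(I−Y) − (I−X) ⪰ 0}`. -/
noncomputable def birkhoffM {n : ℕ} (X Y : Matrix (Fin n) (Fin n) ℝ) : ℝ :=
  sInf {l : ℝ | 0 < l ∧ (l • Y - X).PosSemidef ∧ (l • (1 - Y) - (1 - X)).PosSemidef}

section Aux

variable {n : ℕ}

theorem Matrix.PosSemidef.sqrt_mul_self {A : Matrix (Fin n) (Fin n) ℝ} (hA : A.PosSemidef) :
    hA.sqrt * hA.sqrt = A := by
  unfold Matrix.PosSemidef.sqrt
  conv_rhs => rw [hA.1.spectral_theorem, Unitary.conjStarAlgAut_apply]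
  have hU := Matrix.UnitaryGroup.star_mul_self hA.1.eigenvectorUnitary
  rw [show ∀ a b c d e f : Matrix (Fin n) (Fin n) ℝ, a * b * c * (d * e * f)
      = a * b * (c * d) * e * f by intros; simp only [mul_assoc]]
  rw [hU, mul_one, mul_assoc _ (diagonal _) (diagonal _), diagonal_mul_diagonal]
  congr 3
  funext i
  simp [Real.mul_self_sqrt (hA.eigenvalues_nonneg i)]

/-- The square root of a positive definite matrix is positive definite. -/
lemma sqrt_posDef {Y : Matrix (Fin n) (Fin n) ℝ} (hY : Y.PosDef) :
    hY.posSemidef.sqrt.PosDef := by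
  unfold Matrix.PosSemidef.sqrt
  have hd : (diagonal ((↑) ∘ (√·) ∘ hY.posSemidef.1.eigenvalues) :
      Matrix (Fin n) (Fin n) ℝ).PosDef := by
    rw [posDef_diagonal_iff]
    intro i
    simpa using hY.eigenvalues_pos i
  rw [star_eq_conjTranspose]
  refine hd.mul_mul_conjTranspose_same ?_
  intro v w hvw
  have h2 := congrArg (fun z => z ᵥ* star (hY.posSemidef.1.eigenvectorUnitary :
    Matrix (Fin n) (Fin n) ℝ)) hvw
  simpa only [vecMul_vecMul, (Matrix.mem_unitaryGroup_iff).mp hY.posSemidef.1.eigenvectorUnitary.2, vecMul_one] using h2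

/-- Conjugation by a positive definite matrix preserves positive semidefiniteness. -/
lemma posSemidef_conj_iff {M P : Matrix (Fin n) (Fin n) ℝ} (hP : P.PosDef) :
    (P * M * P).PosSemidef ↔ M.PosSemidef := by
  have hPu := hP.isUnit
  have hPinv : (P⁻¹).IsHermitian := (hP.isHermitian).inv
  constructor
  · intro h
    have := h.mul_mul_conjTranspose_same P⁻¹
    rw [conjTranspose_nonsing_inv, hP.isHermitian.eq] at this
    have e : P⁻¹ * (P * M * P) * P⁻¹ = M := by
      rw [← mul_assoc, ← mul_assoc, nonsing_inv_mul _ (isUnit_iff_isUnit_det _ |>.mp hPu),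
        one_mul, mul_assoc, mul_nonsing_inv _ (isUnit_iff_isUnit_det _ |>.mp hPu), mul_one]
    rwa [e] at this
  · intro h
    have := h.mul_mul_conjTranspose_same P
    rwa [hP.isHermitian.eq] at this

lemma psd_unitary_conj_iff {M : Matrix (Fin n) (Fin n) ℝ}
    (U : Matrix.unitaryGroup (Fin n) ℝ) :
    ((U : Matrix (Fin n) (Fin n) ℝ) * M * star (U : Matrix (Fin n) (Fin n) ℝ)).PosSemidef
      ↔ M.PosSemidef := by
  constructor
  · intro h
    have := h.mul_mul_conjTranspose_same (star (U : Matrix (Fin n) (Fin n) ℝ))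
    rw [star_eq_conjTranspose, conjTranspose_conjTranspose] at this
    have e : star (U : Matrix (Fin n) (Fin n) ℝ) * ((U : Matrix (Fin n) (Fin n) ℝ) * M *
        star (U : Matrix (Fin n) (Fin n) ℝ)) * (U : Matrix (Fin n) (Fin n) ℝ) = M := by
      rw [← mul_assoc, ← mul_assoc, Matrix.UnitaryGroup.star_mul_self, one_mul, mul_assoc,
        Matrix.UnitaryGroup.star_mul_self, mul_one]
    rw [star_eq_conjTranspose] at e
    rwa [e] at this
  · intro h
    simpa [star_eq_conjTranspose] using
      h.mul_mul_conjTranspose_same (U : Matrix (Fin n) (Fin n) ℝ)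

lemma posSemidef_smul_one_sub_iff {A : Matrix (Fin n) (Fin n) ℝ} (hA : A.IsHermitian) (l : ℝ) :
    (l • (1 : Matrix (Fin n) (Fin n) ℝ) - A).PosSemidef ↔ ∀ i, hA.eigenvalues i ≤ l := by
  have key : l • (1 : Matrix (Fin n) (Fin n) ℝ) - A
      = (hA.eigenvectorUnitary : Matrix (Fin n) (Fin n) ℝ)
        * (l • 1 - diagonal (RCLike.ofReal ∘ hA.eigenvalues))
        * star (hA.eigenvectorUnitary : Matrix (Fin n) (Fin n) ℝ) := by
    rw [Matrix.mul_sub, Matrix.sub_mul]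
    congr 1
    · rw [Matrix.mul_smul, Matrix.smul_mul, Matrix.mul_one,
        (Matrix.mem_unitaryGroup_iff).mp hA.eigenvectorUnitary.2]
    · exact hA.spectral_theorem.trans (Unitary.conjStarAlgAut_apply _ _)
  rw [key, psd_unitary_conj_iff]
  have e2 : l • (1 : Matrix (Fin n) (Fin n) ℝ) - diagonal (RCLike.ofReal ∘ hA.eigenvalues)
      = diagonal (fun i => l - hA.eigenvalues i) := by
    rw [← diagonal_one, ← Matrix.diagonal_smul, diagonal_sub]
    funext i
    simp
  rw [e2, posSemidef_diagonal_iff]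
  simp [sub_nonneg]

lemma lmax_le_iff {A : Matrix (Fin n) (Fin n) ℝ} (hA : A.IsHermitian) [Nonempty (Fin n)]
    {l : ℝ} : lmax A ≤ l ↔ ∀ i, hA.eigenvalues i ≤ l := by
  rw [lmax, hA.spectrum_real_eq_range_eigenvalues,
    csSup_le_iff (Set.finite_range _).bddAbove (Set.range_nonempty _)]
  simp

lemma le_lmax {A : Matrix (Fin n) (Fin n) ℝ} (hA : A.IsHermitian) (i : Fin n) :
    hA.eigenvalues i ≤ lmax A := by
  rw [lmax, hA.spectrum_real_eq_range_eigenvalues]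
  exact le_csSup (Set.finite_range _).bddAbove (Set.mem_range_self i)

lemma sSup_inv_eq {s : Set ℝ} (hs : s.Finite) (hne : s.Nonempty) (hpos : ∀ x ∈ s, 0 < x) :
    sSup s⁻¹ = (sInf s)⁻¹ := by
  have hm : sInf s ∈ s := hne.csInf_mem hs
  have hm0 : 0 < sInf s := hpos _ hm
  apply le_antisymm
  · apply csSup_le (hne.inv)
    intro y hy
    rw [Set.mem_inv] at hy
    have h1 : sInf s ≤ y⁻¹ := csInf_le hs.bddBelow hy
    have h2 : (y⁻¹)⁻¹ ≤ (sInf s)⁻¹ := inv_anti₀ hm0 h1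
    rwa [inv_inv] at h2
  · apply le_csSup (hs.inv.bddAbove)
    rw [Set.mem_inv, inv_inv]
    exact hm

lemma sInf_special {a b : ℝ} (ha : 0 < a) :
    sInf {l : ℝ | 0 < l ∧ a ≤ l ∧ b ≤ l} = max a b := by
  have : {l : ℝ | 0 < l ∧ a ≤ l ∧ b ≤ l} = Set.Ici (max a b) := by
    ext l
    simp only [Set.mem_setOf_eq, Set.mem_Ici, max_le_iff]
    constructor
    · rintro ⟨_, h1, h2⟩; exact ⟨h1, h2⟩
    · rintro ⟨h1, h2⟩; exact ⟨lt_of_lt_of_le ha h1, h1, h2⟩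
  rw [this, csInf_Ici]

lemma posDef_conj {X P : Matrix (Fin n) (Fin n) ℝ} (hX : X.PosDef) (hP : P.PosDef) :
    (P * X * P).PosDef := by
  refine posDef_iff_dotProduct_mulVec.mpr ⟨?_, ?_⟩
  · show ((P * X * P)ᴴ = _)
    rw [conjTranspose_mul, conjTranspose_mul, hP.isHermitian.eq, hX.isHermitian.eq, mul_assoc]
  · intro x hx
    have hPx : P *ᵥ x ≠ 0 := by
      intro h
      exact hx (Matrix.mulVec_injective_iff_isUnit.mpr hP.isUnit (by simpa using h))
    have key : star x ⬝ᵥ (P * X * P) *ᵥ x = star (P *ᵥ x) ⬝ᵥ X *ᵥ (P *ᵥ x) := by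
      rw [← mulVec_mulVec, ← mulVec_mulVec, dotProduct_mulVec, star_mulVec,
        hP.isHermitian.eq]
    rw [key]
    exact hX.dotProduct_mulVec_pos hPx

lemma smul_sub_psd_iff {X Y : Matrix (Fin n) (Fin n) ℝ} (hY : Y.PosDef) (l : ℝ) :
    (l • Y - X).PosSemidef ↔
    (l • (1 : Matrix (Fin n) (Fin n) ℝ)
      - hY.posSemidef.sqrt⁻¹ * X * hY.posSemidef.sqrt⁻¹).PosSemidef := by
  set S := hY.posSemidef.sqrt with hSdef
  have hSd : S.PosDef := sqrt_posDef hY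
  have hdet : IsUnit S.det := (isUnit_iff_isUnit_det _).mp hSd.isUnit
  have key : S⁻¹ * (l • Y - X) * S⁻¹ = l • 1 - S⁻¹ * X * S⁻¹ := by
    rw [Matrix.mul_sub, Matrix.sub_mul, Matrix.mul_smul, Matrix.smul_mul]
    congr 2
    rw [show Y = S * S from (hY.posSemidef.sqrt_mul_self).symm, ← mul_assoc,
      nonsing_inv_mul _ hdet, one_mul, mul_nonsing_inv _ hdet]
  rw [← posSemidef_conj_iff (M := l • Y - X) hSd.inv, key]

lemma birkhoff_eq [Nonempty (Fin n)] {X Y : Matrix (Fin n) (Fin n) ℝ}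
    (hX1 : X.PosDef) (hX2 : (1 - X).PosDef) (hY1 : Y.PosDef) (hY2 : (1 - Y).PosDef) :
    birkhoffM X Y = max (lmax (hY1.posSemidef.sqrt⁻¹ * X * hY1.posSemidef.sqrt⁻¹))
        (lmax (hY2.posSemidef.sqrt⁻¹ * (1 - X) * hY2.posSemidef.sqrt⁻¹)) := by
  set A := hY1.posSemidef.sqrt⁻¹ * X * hY1.posSemidef.sqrt⁻¹ with hAdef
  set B := hY2.posSemidef.sqrt⁻¹ * (1 - X) * hY2.posSemidef.sqrt⁻¹ with hBdef
  have hA : A.PosDef := posDef_conj hX1 (sqrt_posDef hY1).inv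
  have hB : B.PosDef := posDef_conj hX2 (sqrt_posDef hY2).inv
  have ha : 0 < lmax A :=
    lt_of_lt_of_le (hA.eigenvalues_pos (Classical.arbitrary _)) (le_lmax hA.isHermitian _)
  have hset : {l : ℝ | 0 < l ∧ (l • Y - X).PosSemidef ∧ (l • (1 - Y) - (1 - X)).PosSemidef}
      = {l : ℝ | 0 < l ∧ lmax A ≤ l ∧ lmax B ≤ l} := by
    ext l
    simp only [Set.mem_setOf_eq]
    refine and_congr Iff.rfl (and_congr ?_ ?_)
    · exact (smul_sub_psd_iff hY1 l).trans
        ((posSemidef_smul_one_sub_iff hA.isHermitian l).trans (lmax_le_iff hA.isHermitian).symm)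
    · exact (smul_sub_psd_iff hY2 l).trans
        ((posSemidef_smul_one_sub_iff hB.isHermitian l).trans (lmax_le_iff hB.isHermitian).symm)
  rw [birkhoffM, hset, sInf_special ha]

lemma spectrum_conj_eq {X Y : Matrix (Fin n) (Fin n) ℝ} (hY : Y.PosDef) :
    spectrum ℝ (Y⁻¹ * X) = spectrum ℝ (hY.posSemidef.sqrt⁻¹ * X * hY.posSemidef.sqrt⁻¹) := by
  set S := hY.posSemidef.sqrt with hSdef
  have hSd : S.PosDef := sqrt_posDef hY
  have hu : IsUnit S := hSd.isUnit
  have hdet : IsUnit S.det := (isUnit_iff_isUnit_det _).mp hu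
  have key : Y⁻¹ * X = (hu.unit⁻¹ : (Matrix (Fin n) (Fin n) ℝ)ˣ) * (S⁻¹ * X * S⁻¹) * hu.unit := by
    rw [Matrix.coe_units_inv, IsUnit.unit_spec,
      show Y = S * S from (hY.posSemidef.sqrt_mul_self).symm, Matrix.mul_inv_rev]
    simp only [mul_assoc, nonsing_inv_mul _ hdet, mul_one]
  rw [key]
  exact spectrum.units_conjugate' (R := ℝ) (u := hu.unit) (a := S⁻¹ * X * S⁻¹)

lemma spectrum_inv_eq {M : Matrix (Fin n) (Fin n) ℝ} (hM : IsUnit M) :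
    spectrum ℝ M⁻¹ = (spectrum ℝ M)⁻¹ := by
  have h := spectrum.map_inv (𝕜 := ℝ) hM.unit
  rw [Matrix.coe_units_inv, IsUnit.unit_spec] at h
  exact h.symm

lemma spec_props [Nonempty (Fin n)] {X Y : Matrix (Fin n) (Fin n) ℝ}
    (hX1 : X.PosDef) (hY1 : Y.PosDef) :
    (spectrum ℝ (Y⁻¹ * X)).Finite ∧ (spectrum ℝ (Y⁻¹ * X)).Nonempty ∧
      ∀ x ∈ spectrum ℝ (Y⁻¹ * X), 0 < x := by
  have hA : (hY1.posSemidef.sqrt⁻¹ * X * hY1.posSemidef.sqrt⁻¹).PosDef :=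
    posDef_conj hX1 (sqrt_posDef hY1).inv
  rw [spectrum_conj_eq hY1, hA.isHermitian.spectrum_real_eq_range_eigenvalues]
  exact ⟨Set.finite_range _, Set.range_nonempty _, by
    rintro x ⟨i, rfl⟩; exact hA.eigenvalues_pos i⟩

lemma lmin_pos [Nonempty (Fin n)] {X Y : Matrix (Fin n) (Fin n) ℝ}
    (hX1 : X.PosDef) (hY1 : Y.PosDef) : 0 < lmin (Y⁻¹ * X) := by
  obtain ⟨hf, hne, hpos⟩ := spec_props hX1 hY1
  exact hpos _ (hne.csInf_mem hf)

lemma lmax_pos [Nonempty (Fin n)] {X Y : Matrix (Fin n) (Fin n) ℝ}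
    (hX1 : X.PosDef) (hY1 : Y.PosDef) : 0 < lmax (Y⁻¹ * X) := by
  obtain ⟨hf, hne, hpos⟩ := spec_props hX1 hY1
  exact hpos _ (hne.csSup_mem hf)

lemma lmax_pair [Nonempty (Fin n)] {X Y : Matrix (Fin n) (Fin n) ℝ}
    (hX1 : X.PosDef) (hY1 : Y.PosDef) : lmax (X⁻¹ * Y) = (lmin (Y⁻¹ * X))⁻¹ := by
  obtain ⟨hf, hne, hpos⟩ := spec_props hX1 hY1
  have hinv : (Y⁻¹ * X)⁻¹ = X⁻¹ * Y := by
    rw [Matrix.mul_inv_rev,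
      Matrix.nonsing_inv_nonsing_inv _ ((isUnit_iff_isUnit_det _).mp hY1.isUnit)]
  have hu : IsUnit (Y⁻¹ * X) := (hY1.inv.isUnit).mul hX1.isUnit
  rw [lmax, lmin, ← hinv, spectrum_inv_eq hu, sSup_inv_eq hf hne hpos]

lemma max_inv_min {a b : ℝ} (ha : 0 < a) (hb : 0 < b) : max a⁻¹ b⁻¹ = (min a b)⁻¹ := by
  rcases le_total a b with h | h
  · rw [min_eq_left h, max_eq_left (inv_anti₀ ha h)]
  · rw [min_eq_right h, max_eq_right (inv_anti₀ hb h)]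

end Aux

/-- (i) The Birkhoff ratio equals a maximum of largest eigenvalues of conjugated
matrices, and (ii) the Hilbert VPM distance symmetrizes the Birkhoff ratio. -/
theorem birkhoffM_eq_and_symmetrization {n : ℕ} (X Y : Matrix (Fin n) (Fin n) ℝ)
    (hX : X ∈ VPM n) (hY : Y ∈ VPM n) :
    birkhoffM X Y
      = max (lmax (hY.1.posSemidef.sqrt⁻¹ * X * hY.1.posSemidef.sqrt⁻¹))
            (lmax (hY.2.posSemidef.sqrt⁻¹ * (1 - X) * hY.2.posSemidef.sqrt⁻¹)) ∧
    dH X Y = Real.log (birkhoffM X Y) + Real.log (birkhoffM Y X) := by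
  rcases Nat.eq_zero_or_pos n with hn | hn
  · subst hn
    haveI : Subsingleton (Matrix (Fin 0) (Fin 0) ℝ) := ⟨fun a b => by ext i; exact i.elim0⟩
    have hspec : ∀ M : Matrix (Fin 0) (Fin 0) ℝ, spectrum ℝ M = ∅ := by
      intro M
      ext x
      simp [spectrum.mem_iff, isUnit_of_subsingleton]
    have hlmax : ∀ M : Matrix (Fin 0) (Fin 0) ℝ, lmax M = 0 := by
      intro M; rw [lmax, hspec, Real.sSup_empty]
    have hlmin : ∀ M : Matrix (Fin 0) (Fin 0) ℝ, lmin M = 0 := by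
      intro M; rw [lmin, hspec, Real.sInf_empty]
    have hpsd : ∀ M : Matrix (Fin 0) (Fin 0) ℝ, M.PosSemidef := by
      intro M
      refine posSemidef_iff_dotProduct_mulVec.mpr ⟨Subsingleton.elim _ _, fun x => ?_⟩
      simp [dotProduct]
    have hb : ∀ Z W : Matrix (Fin 0) (Fin 0) ℝ, birkhoffM Z W = 0 := by
      intro Z W
      have : {l : ℝ | 0 < l ∧ (l • W - Z).PosSemidef ∧ (l • (1 - W) - (1 - Z)).PosSemidef}
          = Set.Ioi 0 := by
        ext l; simp [hpsd]
      rw [birkhoffM, this, csInf_Ioi]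
    constructor
    · rw [hb, hlmax, hlmax]; simp
    · rw [dH, hlmax, hlmax, hlmin, hlmin, hb X Y, hb Y X]
      simp
  · haveI : Nonempty (Fin n) := ⟨⟨0, hn⟩⟩
    obtain ⟨hX1, hX2⟩ := hX
    obtain ⟨hY1, hY2⟩ := hY
    refine ⟨birkhoff_eq hX1 hX2 hY1 hY2, ?_⟩
    have hbXY : birkhoffM X Y = max (lmax (Y⁻¹ * X)) (lmax ((1 - Y)⁻¹ * (1 - X))) := by
      rw [birkhoff_eq hX1 hX2 hY1 hY2]
      rw [show lmax (hY1.posSemidef.sqrt⁻¹ * X * hY1.posSemidef.sqrt⁻¹) = lmax (Y⁻¹ * X) from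
        by rw [lmax, lmax, ← spectrum_conj_eq hY1]]
      rw [show lmax (hY2.posSemidef.sqrt⁻¹ * (1 - X) * hY2.posSemidef.sqrt⁻¹)
          = lmax ((1 - Y)⁻¹ * (1 - X)) from by rw [lmax, lmax, ← spectrum_conj_eq hY2]]
    have hbYX : birkhoffM Y X = (min (lmin (Y⁻¹ * X)) (lmin ((1 - Y)⁻¹ * (1 - X))))⁻¹ := by
      rw [birkhoff_eq hY1 hY2 hX1 hX2]
      rw [show lmax (hX1.posSemidef.sqrt⁻¹ * Y * hX1.posSemidef.sqrt⁻¹) = lmax (X⁻¹ * Y) from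
        by rw [lmax, lmax, ← spectrum_conj_eq hX1]]
      rw [show lmax (hX2.posSemidef.sqrt⁻¹ * (1 - Y) * hX2.posSemidef.sqrt⁻¹)
          = lmax ((1 - X)⁻¹ * (1 - Y)) from by rw [lmax, lmax, ← spectrum_conj_eq hX2]]
      rw [lmax_pair hX1 hY1, lmax_pair hX2 hY2,
        max_inv_min (lmin_pos hX1 hY1) (lmin_pos hX2 hY2)]
    have hmax : 0 < max (lmax (Y⁻¹ * X)) (lmax ((1 - Y)⁻¹ * (1 - X))) :=
      lt_max_of_lt_left (lmax_pos hX1 hY1)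
    have hmin : 0 < min (lmin (Y⁻¹ * X)) (lmin ((1 - Y)⁻¹ * (1 - X))) :=
      lt_min (lmin_pos hX1 hY1) (lmin_pos hX2 hY2)
    rw [hbXY, hbYX, dH, div_eq_mul_inv,
      Real.log_mul hmax.ne' (inv_ne_zero hmin.ne'), Real.log_inv]
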